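/- arXiv:1312.2219 — 2 statements merged into one kernel-verified Lean document; each statement's English description precedes it below -/
import Mathlib

section
/- Let D = max{|a|, |A|, |b|, |B|}. Then for every m ∈ ℕ with m ≥ 1, every n = ±(2m+1), every r ∈ ℤ_{≥0}, and every z ∈ ℂ with |z| ≤ 1/2, one has |σ⁺_r(n,z)| ≤ D · (8D²/m)^{m+r}. Consequently there exist C > 0 and m₀ ∈ ℕ such that for all m ≥ m₀, n = ±(2m+1), and |z| ≤ 1/2, the series ∑_{r=0}^∞ σ⁺_r(n,z) converges absolutely and |β⁺_n(z)| ≤ C · (8D²/m)^m. -/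
open Finset

noncomputable section

/-- Coefficient function `p`: `p(2) = A`, `p(-2) = a`. -/
def pc (a A : ℂ) (w : ℤ) : ℂ := if w = 2 then A else if w = -2 then a else 0

/-- Coefficient function `q`: `q(2) = B`, `q(-2) = b`. -/
def qc (b B : ℂ) (w : ℤ) : ℂ := if w = 2 then B else if w = -2 then b else 0

/-- Vertex `j_k = -n + x_1 + ⋯ + x_k` of a walk `x` starting at `-n`. -/
def vtx (n : ℤ) (x : List ℤ) (k : ℕ) : ℤ := -n + (x.take k).sum

/-- An admissible walk from `-n` to `n`: odd length, steps in `{-2, 2}`, total sum `2n`,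
and the vertices `j_k` (for `1 ≤ k < length`) satisfy `j_k ≠ n` for odd `k` and
`j_k ≠ -n` for even `k`. -/
def AdmX (n : ℤ) (x : List ℤ) : Prop :=
  Odd x.length ∧ (∀ s ∈ x, s = 2 ∨ s = -2) ∧ x.sum = 2 * n ∧
    ∀ k : ℕ, 1 ≤ k → k < x.length →
      (Odd k → vtx n x k ≠ n) ∧ (Even k → vtx n x k ≠ -n)

/-- `X_n(r)`: admissible walks from `-n` to `n` with exactly `r` negative steps if `n > 0`,
resp. exactly `r` positive steps if `n < 0`. -/
def Xw (n : ℤ) (r : ℕ) : Set (List ℤ) :=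
  {x | AdmX n x ∧ (0 < n → x.count (-2) = r) ∧ (n < 0 → x.count 2 = r)}

/-- Numerator of `h⁺`: `q(x_1) p(x_2) q(x_3) ⋯ p(x_{2ν}) q(x_{2ν+1})`. -/
def numX (a A b B : ℂ) (x : List ℤ) : ℂ :=
  ∏ t ∈ Finset.range x.length,
    (if t % 2 = 0 then qc b B (x.getD t 0) else pc a A (x.getD t 0))

/-- Denominator of `h⁺`: the product of the factors `(n - j_k + z)` for odd `k` and
`(n + j_k + z)` for even `k`, `1 ≤ k ≤ 2ν`. -/
def denX (n : ℤ) (x : List ℤ) (z : ℂ) : ℂ :=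
  ∏ k ∈ Finset.Icc 1 (x.length - 1),
    (if k % 2 = 1 then ((n : ℂ) - (vtx n x k : ℂ) + z) else ((n : ℂ) + (vtx n x k : ℂ) + z))

/-- `h⁺(x, z)`. -/
def hX (a A b B : ℂ) (n : ℤ) (x : List ℤ) (z : ℂ) : ℂ := numX a A b B x / denX n x z

/-- `σ⁺_r(n, z) = ∑_{x ∈ X_n(r)} h⁺(x, z)`. -/
def sigmaX (a A b B : ℂ) (n : ℤ) (r : ℕ) (z : ℂ) : ℂ :=
  ∑' x : Xw n r, hX a A b B n (x : List ℤ) z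

/-- `β⁺_n(z) = ∑_{r=0}^∞ σ⁺_r(n, z)`. -/
def betaX (a A b B : ℂ) (n : ℤ) (z : ℂ) : ℂ := ∑' r : ℕ, sigmaX a A b B n r z

/-!
Pair the denominator factors of `h⁺(x, z)` as `(n - j_{2i+1} + z)(n + j_{2i+2} + z)`. The
integers `n - j_{2i+1}` and `n + j_{2i+2}` are even, nonzero by admissibility, and add up to
`2n ± 2`, so each pair has modulus at least `m` when `|z| ≤ 1/2`; hence
`|h⁺(x, z)| ≤ D^{2(m+r)+1} / m^{m+r}`. A walk in `X_n(r)` has `2(m+r)+1` steps, so there are at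
most `2^{2(m+r)+1}` of them, which gives the bound on `σ⁺_r`. For `m ≥ 16 D²` the ratio
`8D²/m` is at most `1/2`, and the series in `r` is dominated by a geometric one.
-/

theorem Finset.prod_Icc_one_two_mul {M : Type*} [CommMonoid M] (g : ℕ → M) (ν : ℕ) :
    ∏ k ∈ Icc 1 (2 * ν), g k = ∏ j ∈ range ν, (g (2 * j + 1) * g (2 * j + 2)) := by
  induction ν with
  | zero => simp
  | succ ν ih =>
    rw [show 2 * (ν + 1) = 2 * ν + 1 + 1 by ring, prod_Icc_succ_top (by omega),
      prod_Icc_succ_top (by omega), ih, prod_range_succ, mul_assoc]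

theorem norm_tsum_subtype_le_card_mul {α E : Type*} [SeminormedAddCommGroup E] {s : Set α}
    {t : Finset α} (hst : s ⊆ t) {f : α → E} {M : ℝ} (hM : 0 ≤ M)
    (hf : ∀ x ∈ s, ‖f x‖ ≤ M) : ‖∑' x : s, f x‖ ≤ t.card * M := by
  rw [tsum_subtype s f, tsum_eq_sum (s := t) fun x hx => Set.indicator_of_notMem
    (fun hxs => hx (hst hxs)) f]
  refine (norm_sum_le _ _).trans ?_
  rw [← nsmul_eq_mul]
  refine sum_le_card_nsmul _ _ _ fun x _ => ?_
  by_cases hx : x ∈ s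
  · simpa [Set.indicator_of_mem hx] using hf x hx
  · simpa [Set.indicator_of_notMem hx f] using hM

theorem summable_norm_and_norm_tsum_le_of_le_geometric {E : Type*} [NormedAddCommGroup E]
    [CompleteSpace E] {f : ℕ → E} {c q : ℝ} (hq0 : 0 ≤ q) (hq : q ≤ 1 / 2)
    (hf : ∀ r, ‖f r‖ ≤ c * q ^ r) :
    Summable (fun r => ‖f r‖) ∧ ‖∑' r, f r‖ ≤ 2 * c := by
  have hc : 0 ≤ c := by simpa using (norm_nonneg _).trans (hf 0)
  have hgeo : Summable fun r => c * q ^ r :=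
    (summable_geometric_of_lt_one hq0 (by linarith)).mul_left c
  have hsum : Summable fun r => ‖f r‖ := .of_nonneg_of_le (fun _ => norm_nonneg _) hf hgeo
  refine ⟨hsum, ?_⟩
  calc ‖∑' r, f r‖ ≤ ∑' r, c * q ^ r :=
        (norm_tsum_le_tsum_norm hsum).trans (hsum.tsum_le_tsum hf hgeo)
    _ = c * (1 - q)⁻¹ := by rw [tsum_mul_left, tsum_geometric_of_lt_one hq0 (by linarith)]
    _ ≤ c * 2 := by
        gcongr
        rw [inv_le_comm₀ (by linarith) two_pos]
        linarith
    _ = 2 * c := mul_comm c 2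

theorem le_mul_sub_half_of_two_le {s t m : ℝ} (hs : 2 ≤ s) (ht : 2 ≤ t) (hst : 4 * m ≤ s + t) :
    m ≤ (s - 1 / 2) * (t - 1 / 2) := by
  nlinarith [mul_nonneg (sub_nonneg.2 hs) (sub_nonneg.2 ht)]

theorem sub_half_le_norm_intCast_add {u : ℤ} {w : ℂ} (hw : ‖w‖ ≤ 1 / 2) :
    (|u| : ℝ) - 1 / 2 ≤ ‖(u : ℂ) + w‖ := by
  have := norm_sub_norm_le (u : ℂ) (-w)
  rw [sub_neg_eq_add, norm_neg, Complex.norm_intCast] at this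
  linarith

theorem two_le_abs_of_two_dvd {u : ℤ} (hu : 2 ∣ u) (h0 : u ≠ 0) : 2 ≤ |u| := by
  obtain ⟨c, rfl⟩ := hu
  rcases abs_cases (2 * c) with h | h <;> omega

theorem two_pow_mul_pow_div_le {D μ : ℝ} (hD : 0 ≤ D) (hμ : 0 < μ) {k : ℕ} (hk : 1 ≤ k) :
    2 ^ (2 * k + 1) * D ^ (2 * k + 1) / μ ^ k ≤ D * (8 * D ^ 2 / μ) ^ k := by
  have h2 : (2 : ℝ) ≤ 2 ^ k := le_self_pow₀ one_le_two (by omega)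
  calc (2 : ℝ) ^ (2 * k + 1) * D ^ (2 * k + 1) / μ ^ k
      = 2 * (4 ^ k * D ^ (2 * k + 1) / μ ^ k) := by
        rw [pow_succ, pow_mul]; norm_num; ring
    _ ≤ 2 ^ k * (4 ^ k * D ^ (2 * k + 1) / μ ^ k) := by gcongr
    _ = D * (8 * D ^ 2 / μ) ^ k := by
        rw [div_pow, mul_pow, show (8 : ℝ) ^ k = 2 ^ k * 4 ^ k by rw [← mul_pow]; norm_num]
        ring

theorem norm_pc_le (a A : ℂ) (w : ℤ) : ‖pc a A w‖ ≤ max ‖a‖ ‖A‖ := by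
  unfold pc
  split_ifs <;> simp

theorem norm_qc_le (b B : ℂ) (w : ℤ) : ‖qc b B w‖ ≤ max ‖b‖ ‖B‖ := by
  unfold qc
  split_ifs <;> simp

theorem norm_numX_le (a A b B : ℂ) (x : List ℤ) :
    ‖numX a A b B x‖ ≤ max (max ‖a‖ ‖A‖) (max ‖b‖ ‖B‖) ^ x.length := by
  rw [numX, norm_prod]
  refine (prod_le_prod (fun _ _ => norm_nonneg _) fun t _ => ?_).trans_eq
    (pow_eq_prod_const _ _).symm
  split_ifs
  · exact (norm_qc_le b B _).trans (le_max_right _ _)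
  · exact (norm_pc_le a A _).trans (le_max_left _ _)

theorem sum_add_four_mul_count_neg_two {x : List ℤ} (hx : ∀ s ∈ x, s = 2 ∨ s = -2) :
    x.sum + 4 * x.count (-2) = 2 * x.length := by
  induction x with
  | nil => simp
  | cons s x ih =>
    simp only [List.mem_cons, forall_eq_or_imp] at hx
    have := ih hx.2
    rcases hx.1 with rfl | rfl <;> simp <;> linarith

theorem sum_add_two_mul_length {x : List ℤ} (hx : ∀ s ∈ x, s = 2 ∨ s = -2) :
    x.sum + 2 * x.length = 4 * x.count 2 := by
  induction x with
  | nil => simp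
  | cons s x ih =>
    simp only [List.mem_cons, forall_eq_or_imp] at hx
    have := ih hx.2
    rcases hx.1 with rfl | rfl <;> simp <;> linarith

theorem vtx_succ (n : ℤ) {x : List ℤ} {k : ℕ} (hk : k < x.length) :
    vtx n x (k + 1) = vtx n x k + x[k] := by
  rw [vtx, vtx, List.take_add_one, List.sum_append, List.getElem?_eq_getElem hk]
  simp [add_assoc]

theorem two_dvd_add_vtx_and_two_dvd_sub_vtx (n : ℤ) {x : List ℤ} (hx : ∀ s ∈ x, 2 ∣ s)
    (k : ℕ) : 2 ∣ n + vtx n x k ∧ 2 ∣ n - vtx n x k := by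
  obtain ⟨c, hc⟩ := List.dvd_sum (l := x.take k) fun s hs => hx s (List.mem_of_mem_take hs)
  exact ⟨⟨c, by simp [vtx, hc]⟩, ⟨n - c, by simp [vtx, hc]; ring⟩⟩

theorem le_norm_mul_norm_of_admX {n : ℤ} {m : ℕ} (hn : n.natAbs = 2 * m + 1) {x : List ℤ}
    (hx : AdmX n x) {z : ℂ} (hz : ‖z‖ ≤ 1 / 2) {j : ℕ} (hj : 2 * j + 2 < x.length) :
    (m : ℝ) ≤ ‖(n : ℂ) - vtx n x (2 * j + 1) + z‖ * ‖(n : ℂ) + vtx n x (2 * j + 2) + z‖ := by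
  obtain ⟨-, hsteps, -, hadm⟩ := hx
  have hdvd : ∀ s ∈ x, 2 ∣ s := fun s hs => by
    rcases hsteps s hs with rfl | rfl <;> decide
  set u := n - vtx n x (2 * j + 1)
  set v := n + vtx n x (2 * j + 2)
  have hu : 2 ≤ |u| := two_le_abs_of_two_dvd
    (two_dvd_add_vtx_and_two_dvd_sub_vtx n hdvd _).2
    (sub_ne_zero.2 ((hadm _ (by omega) (by omega)).1 ⟨j, rfl⟩).symm)
  have hv : 2 ≤ |v| := two_le_abs_of_two_dvd
    (two_dvd_add_vtx_and_two_dvd_sub_vtx n hdvd _).1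
    fun h => (hadm _ (by omega) hj).2 ⟨j + 1, by ring⟩ (by linarith)
  have huv : 4 * (m : ℤ) ≤ |u| + |v| := by
    have hk : 2 * j + 1 < x.length := by omega
    have hsum : u + v = 2 * n + x[2 * j + 1] := by
      simp only [u, v, vtx_succ n hk]; ring
    have := abs_add_le u v
    rcases hsteps _ (List.getElem_mem hk) with hs | hs <;>
      rcases abs_cases (u + v) with h | h <;> omega
  have hv' : (2 : ℝ) ≤ |(v : ℝ)| := by exact_mod_cast hv
  have key := le_mul_sub_half_of_two_le (s := |(u : ℝ)|) (m := m) (by exact_mod_cast hu) hv'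
    (by exact_mod_cast huv)
  rw [show (n : ℂ) - vtx n x (2 * j + 1) = u by push_cast [u]; rfl,
    show (n : ℂ) + vtx n x (2 * j + 2) = v by push_cast [v]; rfl]
  exact key.trans (mul_le_mul (sub_half_le_norm_intCast_add hz) (sub_half_le_norm_intCast_add hz)
    (by linarith) (norm_nonneg _))

theorem pow_le_norm_denX {n : ℤ} {m : ℕ} (hn : n.natAbs = 2 * m + 1) {x : List ℤ}
    (hx : AdmX n x) {z : ℂ} (hz : ‖z‖ ≤ 1 / 2) : (m : ℝ) ^ (x.length / 2) ≤ ‖denX n x z‖ := by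
  have hlen : x.length - 1 = 2 * (x.length / 2) := by
    obtain ⟨k, hk⟩ := hx.1
    omega
  rw [denX, norm_prod, hlen, prod_Icc_one_two_mul, pow_eq_prod_const]
  refine prod_le_prod (fun _ _ => Nat.cast_nonneg _) fun j hj => ?_
  rw [if_pos (by omega), if_neg (by omega)]
  exact le_norm_mul_norm_of_admX hn hx hz (by rw [mem_range] at hj; omega)

theorem length_of_mem_Xw {n : ℤ} (hn : n ≠ 0) {r : ℕ} {x : List ℤ} (hx : x ∈ Xw n r) :
    x.length = n.natAbs + 2 * r := by
  obtain ⟨⟨-, hsteps, hsum, -⟩, hpos, hneg⟩ := hx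
  have h₁ := sum_add_four_mul_count_neg_two hsteps
  have h₂ := sum_add_two_mul_length hsteps
  rcases hn.lt_or_gt with hn | hn
  · have := hneg hn
    omega
  · have := hpos hn
    omega

def signWalks (L : ℕ) : Finset (List ℤ) :=
  univ.image fun f : Fin L → Bool => List.ofFn fun i => if f i then 2 else -2

theorem card_signWalks_le (L : ℕ) : (signWalks L).card ≤ 2 ^ L :=
  card_image_le.trans_eq (by simp)

theorem mem_signWalks {x : List ℤ} (hx : ∀ s ∈ x, s = 2 ∨ s = -2) :
    x ∈ signWalks x.length := by
  refine mem_image.2 ⟨fun i => x[i] = 2, mem_univ _, List.ext_getElem (by simp) fun i _ hi => ?_⟩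
  rcases hx _ (List.getElem_mem hi) with h | h <;> simp [h]

theorem Xw_subset_signWalks {n : ℤ} (hn : n ≠ 0) (r : ℕ) :
    Xw n r ⊆ signWalks (n.natAbs + 2 * r) := fun _ hx =>
  length_of_mem_Xw hn hx ▸ mem_signWalks hx.1.2.1

theorem norm_sigmaX_le {a A b B : ℂ} {D : ℝ} (hD : max (max ‖a‖ ‖A‖) (max ‖b‖ ‖B‖) ≤ D)
    {m : ℕ} (hm : 1 ≤ m) {n : ℤ} (hn : n.natAbs = 2 * m + 1) (r : ℕ) {z : ℂ}
    (hz : ‖z‖ ≤ 1 / 2) : ‖sigmaX a A b B n r z‖ ≤ D * (8 * D ^ 2 / m) ^ (m + r) := by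
  have hn0 : n ≠ 0 := by omega
  have hmpos : (0 : ℝ) < m := by exact_mod_cast hm
  have hmax : 0 ≤ max (max ‖a‖ ‖A‖) (max ‖b‖ ‖B‖) :=
    (norm_nonneg a).trans ((le_max_left _ _).trans (le_max_left _ _))
  have hD0 : 0 ≤ D := hmax.trans hD
  have hterm : ∀ x ∈ Xw n r, ‖hX a A b B n x z‖ ≤ D ^ (2 * (m + r) + 1) / m ^ (m + r) := by
    intro x hx
    have hlen := length_of_mem_Xw hn0 hx
    rw [hX, norm_div]
    refine div_le_div₀ (by positivity) ((norm_numX_le a A b B x).trans ?_) (by positivity)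
      ((pow_le_norm_denX hn hx.1 hz).trans_eq' ?_)
    · rw [hlen, hn]
      exact (pow_le_pow_left₀ hmax hD _).trans_eq (by ring_nf)
    · rw [hlen, hn]
      congr 1
      omega
  calc ‖sigmaX a A b B n r z‖
      ≤ (signWalks (n.natAbs + 2 * r)).card * (D ^ (2 * (m + r) + 1) / m ^ (m + r)) :=
        norm_tsum_subtype_le_card_mul (Xw_subset_signWalks hn0 r) (by positivity) hterm
    _ ≤ 2 ^ (2 * (m + r) + 1) * (D ^ (2 * (m + r) + 1) / m ^ (m + r)) := by
        gcongr
        exact_mod_cast (card_signWalks_le _).trans_eq (by rw [hn]; ring_nf)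
    _ ≤ D * (8 * D ^ 2 / m) ^ (m + r) := by
        rw [← mul_div_assoc]
        exact two_pow_mul_pow_div_le hD0 hmpos (by omega)

theorem stmt3_general (a A b B : ℂ)
    (D : ℝ) (hD : D = max (max ‖a‖ ‖A‖) (max ‖b‖ ‖B‖)) :
    (∀ m : ℕ, 1 ≤ m → ∀ n : ℤ, (n = 2 * m + 1 ∨ n = -(2 * m + 1)) →
      ∀ r : ℕ, ∀ z : ℂ, ‖z‖ ≤ 1 / 2 →
        ‖sigmaX a A b B n r z‖ ≤ D * (8 * D ^ 2 / (m : ℝ)) ^ (m + r)) ∧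
    ∃ C > (0 : ℝ), ∃ m₀ : ℕ, ∀ m : ℕ, m₀ ≤ m → ∀ n : ℤ,
      (n = 2 * m + 1 ∨ n = -(2 * m + 1)) → ∀ z : ℂ, ‖z‖ ≤ 1 / 2 →
        Summable (fun r : ℕ => ‖sigmaX a A b B n r z‖) ∧
        ‖betaX a A b B n z‖ ≤ C * (8 * D ^ 2 / (m : ℝ)) ^ m := by
  have hD0 : 0 ≤ D := hD ▸ (norm_nonneg a).trans ((le_max_left _ _).trans (le_max_left _ _))
  refine ⟨fun m hm n hn r z hz => norm_sigmaX_le hD.ge hm (by omega) r hz,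
    2 * D + 1, by positivity, ⌈16 * D ^ 2⌉₊ + 1, fun m hm n hn z hz => ?_⟩
  have hmpos : (0 : ℝ) < m := by exact_mod_cast (by omega : 0 < m)
  set q := 8 * D ^ 2 / (m : ℝ)
  have hq : q ≤ 1 / 2 := by
    rw [div_le_iff₀ hmpos]
    linarith [Nat.le_ceil (16 * D ^ 2), (by exact_mod_cast hm : (⌈16 * D ^ 2⌉₊ : ℝ) + 1 ≤ m)]
  obtain ⟨hsum, hβ⟩ := summable_norm_and_norm_tsum_le_of_le_geometric (by positivity) hq
    fun r => (norm_sigmaX_le hD.ge (m := m) (n := n) (by omega) (by omega) r hz).trans_eq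
      (by rw [pow_add, mul_assoc])
  refine ⟨hsum, hβ.trans ?_⟩
  have : 0 ≤ q ^ m := by positivity
  linarith

/-- With `D = max {|a|, |A|, |b|, |B|}`: for `m ≥ 1`, `n = ±(2m+1)`, every `r ∈ ℤ_{≥0}`
and `|z| ≤ 1/2` one has `|σ⁺_r(n, z)| ≤ D (8D²/m)^(m+r)`; consequently there are
`C > 0` and `m₀` such that for `m ≥ m₀` the series `∑_r σ⁺_r(n, z)` converges
absolutely and `|β⁺_n(z)| ≤ C (8D²/m)^m`. -/
theorem stmt3 (a A b B : ℂ) (ha : a ≠ 0) (hA : A ≠ 0) (hb : b ≠ 0) (hB : B ≠ 0)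
    (D : ℝ) (hD : D = max (max ‖a‖ ‖A‖) (max ‖b‖ ‖B‖)) :
    (∀ m : ℕ, 1 ≤ m → ∀ n : ℤ, (n = 2 * m + 1 ∨ n = -(2 * m + 1)) →
      ∀ r : ℕ, ∀ z : ℂ, ‖z‖ ≤ 1 / 2 →
        ‖sigmaX a A b B n r z‖ ≤ D * (8 * D ^ 2 / (m : ℝ)) ^ (m + r)) ∧
    ∃ C > (0 : ℝ), ∃ m₀ : ℕ, ∀ m : ℕ, m₀ ≤ m → ∀ n : ℤ,
      (n = 2 * m + 1 ∨ n = -(2 * m + 1)) → ∀ z : ℂ, ‖z‖ ≤ 1 / 2 →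
        Summable (fun r : ℕ => ‖sigmaX a A b B n r z‖) ∧
        ‖betaX a A b B n z‖ ≤ C * (8 * D ^ 2 / (m : ℝ)) ^ m :=
  stmt3_general a A b B D hD
end
end

section
/- There exist a constant C > 0 and m₀ ∈ ℕ such that for every m ≥ m₀ and n = ±(2m+1): the function α_n(z) = ∑_{ν=1}^∞ τ_ν(n,z) is complex-differentiable on the open disc |z| < 1/2, and its derivative satisfies |α_n'(z)| ≤ C/m² for all z with |z| ≤ 1/4. -/
open Finset

noncomputable section

/-- Vertex `j_k = n + w_1 + ⋯ + w_k` of a walk `w` starting at `n`. -/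
def vtxW (n : ℤ) (w : List ℤ) (k : ℕ) : ℤ := n + (w.take k).sum

/-- An admissible walk from `n` to `n` of length `2ν`: steps in `{-2, 2}`, total sum `0`,
and the vertices `j_k` (for `1 ≤ k ≤ 2ν - 1`) satisfy `j_k ≠ -n` for odd `k` and
`j_k ≠ n` for even `k`. -/
def AdmW (n : ℤ) (ν : ℕ) (w : List ℤ) : Prop :=
  w.length = 2 * ν ∧ (∀ s ∈ w, s = 2 ∨ s = -2) ∧ w.sum = 0 ∧
    ∀ k : ℕ, 1 ≤ k → k < w.length →
      (Odd k → vtxW n w k ≠ -n) ∧ (Even k → vtxW n w k ≠ n)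

/-- `W_n(ν)`: admissible walks from `n` to `n` with `2ν` steps. -/
def Ww (n : ℤ) (ν : ℕ) : Set (List ℤ) := {w | AdmW n ν w}

/-- Numerator of `h`: `p(w_1) q(w_2) ⋯ p(w_{2ν-1}) q(w_{2ν})`. -/
def numW (a A b B : ℂ) (w : List ℤ) : ℂ :=
  ∏ t ∈ Finset.range w.length,
    (if t % 2 = 0 then pc a A (w.getD t 0) else qc b B (w.getD t 0))

/-- Denominator of `h`: the product of the factors `(n + j_k + z)` for odd `k` and
`(n - j_k + z)` for even `k`, `1 ≤ k ≤ 2ν - 1`. -/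
def denW (n : ℤ) (w : List ℤ) (z : ℂ) : ℂ :=
  ∏ k ∈ Finset.Icc 1 (w.length - 1),
    (if k % 2 = 1 then ((n : ℂ) + (vtxW n w k : ℂ) + z) else ((n : ℂ) - (vtxW n w k : ℂ) + z))

/-- `h(w, z)`. -/
def hW (a A b B : ℂ) (n : ℤ) (w : List ℤ) (z : ℂ) : ℂ := numW a A b B w / denW n w z

/-- `τ_ν(n, z) = ∑_{w ∈ W_n(ν)} h(w, z)`. -/
def tauW (a A b B : ℂ) (n : ℤ) (ν : ℕ) (z : ℂ) : ℂ :=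
  ∑' w : Ww n ν, hW a A b B n (w : List ℤ) z

/-- `α_n(z) = ∑_{ν=1}^∞ τ_ν(n, z)`. -/
def alphaW (a A b B : ℂ) (n : ℤ) (z : ℂ) : ℂ := ∑' ν : ℕ, tauW a A b B n (ν + 1) z


/-!
Write the denominator of `h(w, z)` as `∏ (d_k + z)` with the integers `d_k = n ± j_k`;
admissibility says exactly that every `d_k` is nonzero, and all of them are even. For
`|n| = 2m + 1` two consecutive factors have product of modulus at least `m`: if `n + j_k` is
small, then `j_{k+1}` is close to `-n` and `n - j_{k+1}` is of size `2|n|`. The last factor is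
`2n ± 2`. As there are at most `4^ν` walks, `|τ_ν(n, z)| ≤ (4M²/m)^ν` on `|z| ≤ 1` whenever `M`
bounds `|a|, |A|, |b|, |B|`, so `α_n` is a uniformly convergent series of holomorphic functions
there. The bound `C/m²` on `α_n'` comes from Cauchy estimates: for `α_n - τ_1 = O(1/m²)` on
discs of radius `1/2`, and for `τ_1`, which is only `O(1/m)` but holomorphic on `|z| < 4m`, on
discs of radius `m`.
-/

section WalkGeometry

variable {n : ℤ} {ν m : ℕ} {w : List ℤ}

def denFactor (n : ℤ) (w : List ℤ) (k : ℕ) : ℤ :=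
  if k % 2 = 1 then n + vtxW n w k else n - vtxW n w k

lemma denW_eq_prod (n : ℤ) (w : List ℤ) (z : ℂ) :
    denW n w z = ∏ k ∈ Icc 1 (w.length - 1), ((denFactor n w k : ℂ) + z) := by
  unfold denW denFactor
  refine prod_congr rfl fun k _ => ?_
  split_ifs <;> push_cast <;> rfl

lemma AdmW.denFactor_ne_zero (hw : AdmW n ν w) {k : ℕ} (hk1 : 1 ≤ k) (hk : k < w.length) :
    denFactor n w k ≠ 0 := by
  have hadm := hw.2.2.2 k hk1 hk
  unfold denFactor
  split_ifs with h
  · have := hadm.1 (Nat.odd_iff.2 h); omega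
  · have := hadm.2 (Nat.even_iff.2 (by omega)); omega

lemma AdmW.two_dvd_denFactor (hw : AdmW n ν w) (k : ℕ) : 2 ∣ denFactor n w k := by
  have hs : 2 ∣ (w.take k).sum := List.dvd_sum fun s hs => by
    rcases hw.2.1 s (List.take_subset _ _ hs) with rfl | rfl <;> norm_num
  unfold denFactor vtxW
  split_ifs <;> omega

lemma AdmW.two_le_abs_denFactor (hw : AdmW n ν w) {k : ℕ} (hk1 : 1 ≤ k) (hk : k < w.length) :
    2 ≤ |denFactor n w k| :=
  Int.le_of_dvd (abs_pos.2 (hw.denFactor_ne_zero hk1 hk)) ((dvd_abs _ _).2 (hw.two_dvd_denFactor k))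

lemma AdmW.vtxW_succ (hw : AdmW n ν w) {k : ℕ} (hk : k < w.length) :
    vtxW n w (k + 1) = vtxW n w k + 2 ∨ vtxW n w (k + 1) = vtxW n w k - 2 := by
  unfold vtxW
  rw [List.sum_take_succ _ _ hk]
  rcases hw.2.1 _ (List.getElem_mem hk) with h | h <;> rw [h] <;> omega

lemma AdmW.vtxW_last (hw : AdmW n ν w) (hν : 1 ≤ ν) :
    vtxW n w (2 * ν - 1) = n + 2 ∨ vtxW n w (2 * ν - 1) = n - 2 := by
  have hend : vtxW n w (2 * ν - 1 + 1) = n := by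
    rw [Nat.sub_add_cancel (by omega), ← hw.1, vtxW, List.take_length, hw.2.2.1, add_zero]
  rcases hw.vtxW_succ (k := 2 * ν - 1) (by rw [hw.1]; omega) with h | h <;> omega

lemma AdmW.le_abs_denFactor_or_le_abs_denFactor_succ (hw : AdmW n ν w) (hn : |n| = 2 * m + 1)
    {k : ℕ} (hk : k % 2 = 1) (hk' : k + 1 < w.length) :
    (m : ℤ) + 1 ≤ |denFactor n w k| ∨ 3 * (m : ℤ) ≤ |denFactor n w (k + 1)| := by
  have hstep := hw.vtxW_succ (k := k) (by omega)
  unfold denFactor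
  rw [if_pos hk, if_neg (by omega)]
  rcases abs_eq (by positivity) |>.1 hn with hn | hn <;>
    rcases hstep with h | h <;> rw [h] <;>
    simp only [le_abs'] <;> omega

lemma AdmW.le_abs_denFactor_last (hw : AdmW n ν w) (hν : 1 ≤ ν) (hn : |n| = 2 * m + 1) :
    4 * (m : ℤ) ≤ |denFactor n w (2 * ν - 1)| := by
  unfold denFactor
  rw [if_pos (by omega)]
  rcases abs_eq (by positivity) |>.1 hn with hn | hn <;>
    rcases hw.vtxW_last hν with h | h <;> rw [h] <;>
    simp only [le_abs'] <;> omega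

end WalkGeometry

lemma abs_sub_norm_le_norm_intCast_add (d : ℤ) (z : ℂ) : |(d : ℝ)| - ‖z‖ ≤ ‖(d : ℂ) + z‖ := by
  simpa [Complex.norm_intCast] using norm_sub_norm_le (d : ℂ) (-z)

lemma pow_le_prod_Icc_of_pairs {g : ℕ → ℝ} (hg : ∀ k, 0 ≤ g k) {c : ℝ} (hc : 0 ≤ c) (N : ℕ)
    (hpair : ∀ i < N, c ≤ g (2 * i + 1) * g (2 * i + 2)) :
    c ^ N ≤ ∏ k ∈ Icc 1 (2 * N), g k := by
  induction N with
  | zero => simp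
  | succ N ih =>
    rw [show 2 * (N + 1) = 2 * N + 1 + 1 by ring, prod_Icc_succ_top (by omega),
      prod_Icc_succ_top (by omega), mul_assoc, pow_succ]
    exact mul_le_mul (ih fun i hi => hpair i (by omega)) (hpair N (by omega)) hc
      (prod_nonneg fun k _ => hg k)

section DenominatorBounds

variable {n : ℤ} {ν m : ℕ} {w : List ℤ} {z : ℂ}

lemma AdmW.one_le_norm_denFactor_add (hw : AdmW n ν w) {k : ℕ} (hk1 : 1 ≤ k) (hk : k < w.length)
    (hz : ‖z‖ ≤ 1) : 1 ≤ ‖(denFactor n w k : ℂ) + z‖ := by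
  have h2 : (2 : ℝ) ≤ |(denFactor n w k : ℝ)| := by exact_mod_cast hw.two_le_abs_denFactor hk1 hk
  linarith [abs_sub_norm_le_norm_intCast_add (denFactor n w k) z]

lemma AdmW.le_norm_mul_norm_denFactor_add (hw : AdmW n ν w) (hn : |n| = 2 * m + 1) (hm : 1 ≤ m)
    {k : ℕ} (hk : k % 2 = 1) (hk' : k + 1 < w.length) (hz : ‖z‖ ≤ 1) :
    (m : ℝ) ≤ ‖(denFactor n w k : ℂ) + z‖ * ‖(denFactor n w (k + 1) : ℂ) + z‖ := by
  have h1 := hw.one_le_norm_denFactor_add (k := k) (by omega) (by omega) hz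
  have h2 := hw.one_le_norm_denFactor_add (k := k + 1) (by omega) hk' hz
  have hm' : (1 : ℝ) ≤ m := by exact_mod_cast hm
  rcases hw.le_abs_denFactor_or_le_abs_denFactor_succ hn hk hk' with hbig | hbig
  · have := abs_sub_norm_le_norm_intCast_add (denFactor n w k) z
    have : (m : ℝ) + 1 ≤ |(denFactor n w k : ℝ)| := by exact_mod_cast hbig
    nlinarith
  · have := abs_sub_norm_le_norm_intCast_add (denFactor n w (k + 1)) z
    have : 3 * (m : ℝ) ≤ |(denFactor n w (k + 1) : ℝ)| := by exact_mod_cast hbig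
    nlinarith

lemma AdmW.sub_norm_le_norm_last_denFactor_add (hw : AdmW n ν w) (hν : 1 ≤ ν)
    (hn : |n| = 2 * m + 1) : 4 * (m : ℝ) - ‖z‖ ≤ ‖(denFactor n w (2 * ν - 1) : ℂ) + z‖ := by
  have : 4 * (m : ℝ) ≤ |(denFactor n w (2 * ν - 1) : ℝ)| := by
    exact_mod_cast hw.le_abs_denFactor_last hν hn
  linarith [abs_sub_norm_le_norm_intCast_add (denFactor n w (2 * ν - 1)) z]

lemma AdmW.pow_le_norm_denW (hw : AdmW n ν w) (hn : |n| = 2 * m + 1) (hm : 1 ≤ m)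
    (hz : ‖z‖ ≤ 1) : (m : ℝ) ^ ν ≤ ‖denW n w z‖ := by
  rw [denW_eq_prod, norm_prod, hw.1]
  rcases Nat.eq_zero_or_pos ν with rfl | hν
  · simp
  obtain ⟨N, rfl⟩ : ∃ N, ν = N + 1 := ⟨ν - 1, by omega⟩
  have hpairs : (m : ℝ) ^ N ≤ ∏ k ∈ Icc 1 (2 * N), ‖(denFactor n w k : ℂ) + z‖ :=
    pow_le_prod_Icc_of_pairs (fun _ => norm_nonneg _) (Nat.cast_nonneg m) N fun i hi =>
      hw.le_norm_mul_norm_denFactor_add hn hm (by omega) (by rw [hw.1]; omega) hz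
  have hlast := hw.sub_norm_le_norm_last_denFactor_add (z := z) hν hn
  have hm' : (1 : ℝ) ≤ m := by exact_mod_cast hm
  rw [show 2 * (N + 1) - 1 = 2 * N + 1 by omega, prod_Icc_succ_top (by omega), pow_succ]
  rw [show 2 * (N + 1) - 1 = 2 * N + 1 by omega] at hlast
  exact mul_le_mul hpairs (by linarith) (Nat.cast_nonneg m) (prod_nonneg fun _ _ => norm_nonneg _)

lemma AdmW.sub_norm_le_norm_denW_of_one (hw : AdmW n 1 w) (hn : |n| = 2 * m + 1) :
    4 * (m : ℝ) - ‖z‖ ≤ ‖denW n w z‖ := by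
  simpa [denW_eq_prod, hw.1] using hw.sub_norm_le_norm_last_denFactor_add (z := z) le_rfl hn

end DenominatorBounds

def signLists (N : ℕ) : Finset (List ℤ) :=
  univ.image fun f : Fin N → ({2, -2} : Finset ℤ) => List.ofFn fun i => (f i : ℤ)

lemma card_signLists_le (N : ℕ) : #(signLists N) ≤ 2 ^ N :=
  card_image_le.trans (by simp)

lemma mem_signLists {w : List ℤ} (hs : ∀ s ∈ w, s = 2 ∨ s = -2) : w ∈ signLists w.length :=
  mem_image.2 ⟨fun i => ⟨w[i], by simpa using hs _ (List.getElem_mem _)⟩, mem_univ _,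
    List.ofFn_getElem⟩

lemma finite_Ww (n : ℤ) (ν : ℕ) : (Ww n ν).Finite :=
  (signLists (2 * ν)).finite_toSet.subset fun _ hw => hw.1 ▸ mem_signLists hw.2.1

lemma card_toFinset_Ww_le (n : ℤ) (ν : ℕ) : #(finite_Ww n ν).toFinset ≤ 4 ^ ν := by
  refine (card_le_card fun w hw => ?_).trans ((card_signLists_le (2 * ν)).trans_eq (pow_mul 2 2 ν))
  have hw : AdmW n ν w := (finite_Ww n ν).mem_toFinset.1 hw
  exact hw.1 ▸ mem_signLists hw.2.1

lemma tauW_eq_sum (a A b B : ℂ) (n : ℤ) (ν : ℕ) (z : ℂ) :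
    tauW a A b B n ν z = ∑ w ∈ (finite_Ww n ν).toFinset, hW a A b B n w z := by
  rw [tauW, ← Finset.tsum_subtype', Set.Finite.coe_toFinset]

lemma differentiable_denW (n : ℤ) (w : List ℤ) : Differentiable ℂ (denW n w) := by
  rw [show denW n w = _ from funext (denW_eq_prod n w)]
  fun_prop

section TauBounds

open Metric

variable {a A b B : ℂ} {n : ℤ} {ν m : ℕ} {z : ℂ} {M : ℝ}

lemma norm_numW_le (hM : max (max ‖a‖ ‖A‖) (max ‖b‖ ‖B‖) ≤ M) {w : List ℤ}
    (hs : ∀ s ∈ w, s = 2 ∨ s = -2) : ‖numW a A b B w‖ ≤ M ^ w.length := by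
  obtain ⟨⟨ha, hA⟩, hb, hB⟩ := And.imp max_le_iff.1 max_le_iff.1 (max_le_iff.1 hM)
  rw [numW, norm_prod]
  refine (prod_le_prod (fun _ _ => norm_nonneg _) fun t ht => ?_).trans_eq
    (by rw [prod_const, card_range])
  have ht : t < w.length := mem_range.1 ht
  rw [List.getD_eq_getElem w 0 ht]
  rcases hs _ (List.getElem_mem ht) with h | h <;> rw [h] <;> split_ifs <;> simpa [pc, qc]

lemma norm_tauW_le {D : ℝ} (hD : 0 < D) (hM : max (max ‖a‖ ‖A‖) (max ‖b‖ ‖B‖) ≤ M)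
    (hden : ∀ w ∈ Ww n ν, D ≤ ‖denW n w z‖) :
    ‖tauW a A b B n ν z‖ ≤ (4 * M ^ 2) ^ ν / D := by
  have hM0 : 0 ≤ M := (norm_nonneg a).trans ((le_max_left _ _).trans ((le_max_left _ _).trans hM))
  have hterm : ∀ w ∈ (finite_Ww n ν).toFinset, ‖hW a A b B n w z‖ ≤ M ^ (2 * ν) / D := by
    intro w hw
    have hw : AdmW n ν w := (finite_Ww n ν).mem_toFinset.1 hw
    rw [hW, norm_div, ← hw.1]
    exact div_le_div₀ (by positivity) (norm_numW_le hM hw.2.1) hD (hden w hw)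
  rw [tauW_eq_sum]
  calc ‖∑ w ∈ (finite_Ww n ν).toFinset, hW a A b B n w z‖
      ≤ ∑ _w ∈ (finite_Ww n ν).toFinset, M ^ (2 * ν) / D := norm_sum_le_of_le _ hterm
    _ ≤ 4 ^ ν * (M ^ (2 * ν) / D) := by
      rw [sum_const, nsmul_eq_mul]
      gcongr
      exact_mod_cast card_toFinset_Ww_le n ν
    _ = (4 * M ^ 2) ^ ν / D := by rw [mul_pow, ← pow_mul, mul_div_assoc]

lemma differentiableAt_tauW (hden : ∀ w ∈ Ww n ν, denW n w z ≠ 0) :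
    DifferentiableAt ℂ (tauW a A b B n ν) z := by
  rw [show tauW a A b B n ν = fun y => ∑ w ∈ (finite_Ww n ν).toFinset, hW a A b B n w y from
    funext (tauW_eq_sum a A b B n ν)]
  refine DifferentiableAt.fun_sum fun w hw => ?_
  exact (differentiableAt_const _).div (differentiable_denW n w z)
    (hden w ((finite_Ww n ν).mem_toFinset.1 hw))


lemma norm_tauW_le_pow (hn : |n| = 2 * m + 1) (hm : 1 ≤ m)
    (hM : max (max ‖a‖ ‖A‖) (max ‖b‖ ‖B‖) ≤ M) (hz : ‖z‖ ≤ 1) :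
    ‖tauW a A b B n ν z‖ ≤ (4 * M ^ 2 / m) ^ ν := by
  rw [div_pow]
  exact norm_tauW_le (by positivity) hM fun w hw => AdmW.pow_le_norm_denW hw hn hm hz

lemma differentiableOn_tauW (hn : |n| = 2 * m + 1) (hm : 1 ≤ m) :
    DifferentiableOn ℂ (tauW a A b B n ν) (ball 0 1) := fun z hz =>
  (differentiableAt_tauW fun w hw => norm_pos_iff.1 <| (pow_pos (by exact_mod_cast hm) ν).trans_le
    (AdmW.pow_le_norm_denW hw hn hm (mem_ball_zero_iff.1 hz).le)).differentiableWithinAt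

lemma differentiableOn_tauW_one (hn : |n| = 2 * m + 1) :
    DifferentiableOn ℂ (tauW a A b B n 1) (ball 0 (4 * m)) := fun _ hz =>
  (differentiableAt_tauW fun _ hw => norm_pos_iff.1 <| (sub_pos.2 (mem_ball_zero_iff.1 hz)).trans_le
    (AdmW.sub_norm_le_norm_denW_of_one hw hn)).differentiableWithinAt

lemma norm_deriv_tauW_one_le (hn : |n| = 2 * m + 1) (hm : 1 ≤ m)
    (hM : max (max ‖a‖ ‖A‖) (max ‖b‖ ‖B‖) ≤ M) (hz : ‖z‖ ≤ 1 / 4) :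
    ‖deriv (tauW a A b B n 1) z‖ ≤ 2 * M ^ 2 / (m : ℝ) ^ 2 := by
  have hm' : (1 : ℝ) ≤ m := by exact_mod_cast hm
  have hnorm : ∀ y ∈ closedBall z m, ‖y‖ ≤ m + 1 / 4 := fun y hy => by
    linarith [norm_le_norm_sub_add y z, mem_closedBall.1 hy, dist_eq_norm y z]
  have hsub : closedBall z m ⊆ ball 0 (4 * m) := fun y hy =>
    mem_ball_zero_iff.2 (by linarith [hnorm y hy])
  have hsphere : ∀ y ∈ sphere z m, ‖tauW a A b B n 1 y‖ ≤ 4 * M ^ 2 / (2 * m) := by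
    intro y hy
    have hy := hnorm y (sphere_subset_closedBall hy)
    refine (norm_tauW_le (by linarith) hM fun w hw =>
      (AdmW.sub_norm_le_norm_denW_of_one hw hn).trans' (by linarith : 2 * (m : ℝ) ≤ _)).trans ?_
    rw [pow_one]
  calc ‖deriv (tauW a A b B n 1) z‖ ≤ 4 * M ^ 2 / (2 * m) / m :=
        Complex.norm_deriv_le_of_forall_mem_sphere_norm_le (by positivity)
          ((differentiableOn_tauW_one hn).diffContOnCl_ball hsub) hsphere
    _ = 2 * M ^ 2 / (m : ℝ) ^ 2 := by field_simp; ring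

end TauBounds

section GeometricSeries

open Metric

variable {f : ℕ → ℂ → ℂ} {r : ℝ}

lemma differentiableOn_tsum_of_norm_le_pow (hr0 : 0 ≤ r) (hr : r < 1)
    (hf : ∀ i, DifferentiableOn ℂ (f i) (ball 0 1))
    (hfr : ∀ i, ∀ y ∈ ball (0 : ℂ) 1, ‖f i y‖ ≤ r ^ (i + 1)) :
    DifferentiableOn ℂ (fun y => ∑' i, f i y) (ball 0 1) :=
  Complex.differentiableOn_tsum_of_summable_norm
    ((summable_geometric_of_lt_one hr0 hr).mul_left r |>.congr fun i => (pow_succ' r i).symm)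
    hf isOpen_ball hfr

lemma norm_deriv_tsum_sub_deriv_le (hr0 : 0 ≤ r) (hr : r ≤ 1 / 2)
    (hf : ∀ i, DifferentiableOn ℂ (f i) (ball 0 1))
    (hfr : ∀ i, ∀ y ∈ ball (0 : ℂ) 1, ‖f i y‖ ≤ r ^ (i + 1)) {z : ℂ} (hz : ‖z‖ ≤ 1 / 4) :
    ‖deriv (fun y => ∑' i, f i y) z - deriv (f 0) z‖ ≤ 4 * r ^ 2 := by
  have hr1 : r < 1 := by linarith
  have hF := differentiableOn_tsum_of_norm_le_pow hr0 hr1 hf hfr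
  have hsub : closedBall z (1 / 2) ⊆ ball 0 1 := fun y hy => mem_ball_zero_iff.2 (by
    linarith [norm_le_norm_sub_add y z, mem_closedBall.1 hy, dist_eq_norm y z])
  have hz1 : z ∈ ball (0 : ℂ) 1 := hsub (mem_closedBall_self (by norm_num))
  have htail : ∀ y ∈ ball (0 : ℂ) 1, ‖(∑' i, f i y) - f 0 y‖ ≤ 2 * r ^ 2 := by
    intro y hy
    have hsum : Summable fun i => f i y :=
      ((summable_geometric_of_lt_one hr0 hr1).mul_left r).of_norm_bounded fun i =>
        (hfr i y hy).trans_eq (pow_succ' r i)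
    rw [hsum.tsum_eq_zero_add, add_sub_cancel_left]
    refine (tsum_of_norm_bounded ((hasSum_geometric_of_lt_one hr0 hr1).mul_left (r ^ 2))
      fun i => (hfr (i + 1) y hy).trans_eq (by ring)).trans ?_
    rw [← div_eq_mul_inv, div_le_iff₀ (by linarith)]
    nlinarith [sq_nonneg r]
  rw [← deriv_sub (hF.differentiableAt (isOpen_ball.mem_nhds hz1))
    ((hf 0).differentiableAt (isOpen_ball.mem_nhds hz1))]
  calc ‖deriv ((fun y => ∑' i, f i y) - f 0) z‖ ≤ 2 * r ^ 2 / (1 / 2) :=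
        Complex.norm_deriv_le_of_forall_mem_sphere_norm_le (by norm_num)
          ((hF.sub (hf 0)).diffContOnCl_ball hsub)
          fun y hy => htail y (hsub (sphere_subset_closedBall hy))
    _ = 4 * r ^ 2 := by ring

end GeometricSeries

theorem stmt7_general (a A b B : ℂ) :
    ∃ C > (0 : ℝ), ∃ m₀ : ℕ, ∀ m : ℕ, m₀ ≤ m → ∀ n : ℤ,
      (n = 2 * m + 1 ∨ n = -(2 * m + 1)) →
      (∀ z ∈ Metric.ball (0 : ℂ) (1 / 2), DifferentiableAt ℂ (alphaW a A b B n) z) ∧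
      (∀ z : ℂ, ‖z‖ ≤ 1 / 4 → ‖deriv (alphaW a A b B n) z‖ ≤ C / (m : ℝ) ^ 2) := by
  set M := max 1 (max (max ‖a‖ ‖A‖) (max ‖b‖ ‖B‖))
  have hM : max (max ‖a‖ ‖A‖) (max ‖b‖ ‖B‖) ≤ M := le_max_right _ _
  have hM1 : 1 ≤ M := le_max_left _ _
  refine ⟨2 * M ^ 2 + 64 * M ^ 4, by positivity, ⌈8 * M ^ 2⌉₊, fun m hm₀ n hn => ?_⟩
  have hmM : 8 * M ^ 2 ≤ m := Nat.ceil_le.1 hm₀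
  have hm : 1 ≤ m := by exact_mod_cast (by nlinarith : (1 : ℝ) ≤ m)
  have hn : |n| = 2 * m + 1 := (abs_eq (by positivity)).2 hn
  have hr : 4 * M ^ 2 / m ≤ 1 / 2 := by
    rw [div_le_iff₀ (by positivity)]; linarith
  have hτ := fun i => differentiableOn_tauW (a := a) (A := A) (b := b) (B := B) (ν := i + 1) hn hm
  have hτr : ∀ i, ∀ y ∈ Metric.ball (0 : ℂ) 1,
      ‖tauW a A b B n (i + 1) y‖ ≤ (4 * M ^ 2 / m) ^ (i + 1) :=
    fun i y hy => norm_tauW_le_pow hn hm hM (mem_ball_zero_iff.1 hy).le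
  refine ⟨fun z hz => ?_, fun z hz => ?_⟩
  · exact (differentiableOn_tsum_of_norm_le_pow (by positivity) (by linarith) hτ hτr)
      |>.differentiableAt (Metric.isOpen_ball.mem_nhds (Metric.ball_subset_ball (by norm_num) hz))
  calc ‖deriv (alphaW a A b B n) z‖
      ≤ ‖deriv (alphaW a A b B n) z - deriv (tauW a A b B n 1) z‖ + ‖deriv (tauW a A b B n 1) z‖ :=
        norm_le_norm_sub_add _ _
    _ ≤ 4 * (4 * M ^ 2 / m) ^ 2 + 2 * M ^ 2 / (m : ℝ) ^ 2 :=
        add_le_add (norm_deriv_tsum_sub_deriv_le (by positivity) hr hτ hτr hz)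
          (norm_deriv_tauW_one_le hn hm hM hz)
    _ = (2 * M ^ 2 + 64 * M ^ 4) / (m : ℝ) ^ 2 := by ring

/-- There exist `C > 0` and `m₀` such that for every `m ≥ m₀` and `n = ±(2m+1)`, the
function `α_n` is complex-differentiable on the open disc `|z| < 1/2` and its derivative
satisfies `|α_n'(z)| ≤ C/m²` for all `|z| ≤ 1/4`. -/
theorem stmt7 (a A b B : ℂ) (ha : a ≠ 0) (hA : A ≠ 0) (hb : b ≠ 0) (hB : B ≠ 0) :
    ∃ C > (0 : ℝ), ∃ m₀ : ℕ, ∀ m : ℕ, m₀ ≤ m → ∀ n : ℤ,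
      (n = 2 * m + 1 ∨ n = -(2 * m + 1)) →
      (∀ z ∈ Metric.ball (0 : ℂ) (1 / 2), DifferentiableAt ℂ (alphaW a A b B n) z) ∧
      (∀ z : ℂ, ‖z‖ ≤ 1 / 4 → ‖deriv (alphaW a A b B n) z‖ ≤ C / (m : ℝ) ^ 2) :=
  stmt7_general a A b B
end
end
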